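/- Let S be a unital ring, σ injective, δ a left σ-derivation, and f ∈ R = S[t;σ,δ] monic of degree m ≥ 2. Then the Petit algebra S_f = R/Rf is associative if and only if Rf is a two-sided ideal of R (i.e., f is right-invariant: fR ⊆ Rf). -/

import Mathlib

/-- An abstract presentation of the skew polynomial ring `S[t;σ,δ]`:
a ring `R` together with an embedding of `S`, a variable `t` satisfying the
commutation rule `t·a = σ(a)·t + δ(a)`, such that the `t^i` form a basis of `R`
as a left `S`-module (encoded by the coefficient equivalence). -/
structure SkewPolyRing (S : Type*) (R : Type*) [Ring S] [Ring R]
    (σ : S →+* S) (δ : S →+ S) : Type _ where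
  ι : S →+* R
  t : R
  t_comm : ∀ a : S, t * ι a = ι (σ a) * t + ι (δ a)
  coeff : R ≃+ (ℕ →₀ S)
  coeff_symm : ∀ p : ℕ →₀ S, coeff.symm p = p.sum fun i a => ι a * t ^ i

namespace SkewPolyRing

variable {S R : Type*} [Ring S] [Ring R] {σ : S →+* S} {δ : S →+ S}

/-- `g` has degree `< m`. -/
def degLT (P : SkewPolyRing S R σ δ) (g : R) (m : ℕ) : Prop :=
  ∀ i, m ≤ i → P.coeff g i = 0

/-- The degree of a skew polynomial (with `deg 0 = 0` by convention). -/
noncomputable def deg (P : SkewPolyRing S R σ δ) (g : R) : ℕ :=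
  (P.coeff g).support.sup id

/-- `f` is monic of degree `m`. -/
def MonicDeg (P : SkewPolyRing S R σ δ) (f : R) (m : ℕ) : Prop :=
  P.coeff f m = 1 ∧ ∀ i, m < i → P.coeff f i = 0

/-- `modr` computes a remainder of right division by `f`. -/
def IsModr (P : SkewPolyRing S R σ δ) (f : R) (m : ℕ) (modr : R → R) : Prop :=
  ∀ g : R, P.degLT (modr g) m ∧ ∃ q : R, g = q * f + modr g

end SkewPolyRing

/-!
Since `f` is monic, remainders of right division by `f` are unique, so `modr x = modr y` exactly
when `x - y ∈ R f`. If `R f` is two-sided, both sides of the associativity law are therefore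
congruent to `g h k`. Conversely, associativity for `t ^ (m - 1)`, `t`, `k` (all of degree `< m`
because `m ≥ 2`) reads `(t ^ m - f) k ≡ t ^ m k`, so `f k ∈ R f` for every `k` of degree `< m`,
and then for every `k` since `k ≡ modr k`.
-/

theorem Ideal.isTwoSided_span_singleton_iff {R : Type*} [Semiring R] (f : R) :
    (Ideal.span {f}).IsTwoSided ↔ ∀ r : R, ∃ q : R, f * r = q * f := by
  simp only [Ideal.isTwoSided_iff, Ideal.mem_span_singleton']
  constructor
  · intro h r
    obtain ⟨q, hq⟩ := h r ⟨1, one_mul f⟩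
    exact ⟨q, hq.symm⟩
  · rintro h _ r ⟨q, rfl⟩
    obtain ⟨q', hq'⟩ := h r
    exact ⟨q * q', by rw [mul_assoc, mul_assoc, hq']⟩

namespace SkewPolyRing

variable {S R : Type*} [Ring S] [Ring R] {σ : S →+* S} {δ : S →+ S} (P : SkewPolyRing S R σ δ)

lemma coeff_ι_mul_t_pow (a : S) (i : ℕ) :
    P.coeff (P.ι a * P.t ^ i) = Finsupp.single i a := by
  rw [← Finsupp.sum_single_index (h := fun i a => P.ι a * P.t ^ i) (by simp),
    ← P.coeff_symm, AddEquiv.apply_symm_apply]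

lemma coeff_t_pow (i : ℕ) : P.coeff (P.t ^ i) = Finsupp.single i 1 := by
  simpa using P.coeff_ι_mul_t_pow 1 i

lemma sum_coeff (g : R) : (P.coeff g).sum (fun i a => P.ι a * P.t ^ i) = g := by
  rw [← P.coeff_symm, AddEquiv.symm_apply_apply]

lemma coeff_mul_t_pow (q : R) (k : ℕ) :
    P.coeff (q * P.t ^ k) = (P.coeff q).mapDomain (· + k) := by
  conv_lhs => rw [← P.sum_coeff q, Finsupp.sum_mul]
  simp only [map_finsuppSum, mul_assoc, ← pow_add, coeff_ι_mul_t_pow]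
  rfl

variable {P}

lemma lt_of_mem_support {g : R} {n i : ℕ} (hg : P.degLT g n) (hi : i ∈ (P.coeff g).support) :
    i < n :=
  lt_of_not_ge fun h => Finsupp.mem_support_iff.mp hi (hg i h)

lemma degLT_mono {g : R} {n n' : ℕ} (h : n ≤ n') (hg : P.degLT g n) : P.degLT g n' :=
  fun i hi => hg i (h.trans hi)

lemma degLT_add {x y : R} {n : ℕ} (hx : P.degLT x n) (hy : P.degLT y n) :
    P.degLT (x + y) n := fun i hi => by
  rw [map_add, Finsupp.add_apply, hx i hi, hy i hi, add_zero]

lemma degLT_neg {x : R} {n : ℕ} (hx : P.degLT x n) : P.degLT (-x) n := fun i hi => by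
  rw [map_neg, Finsupp.neg_apply, hx i hi, neg_zero]

lemma degLT_sub {x y : R} {n : ℕ} (hx : P.degLT x n) (hy : P.degLT y n) :
    P.degLT (x - y) n :=
  sub_eq_add_neg x y ▸ degLT_add hx (degLT_neg hy)

lemma degLT_sum {ι : Type*} {s : Finset ι} {g : ι → R} {n : ℕ}
    (h : ∀ i ∈ s, P.degLT (g i) n) : P.degLT (∑ i ∈ s, g i) n := fun j hj => by
  rw [map_sum, Finset.sum_apply']
  exact Finset.sum_eq_zero fun i hi => h i hi j hj

lemma degLT_ι_mul_t_pow (a : S) {i n : ℕ} (hi : i < n) : P.degLT (P.ι a * P.t ^ i) n :=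
  fun j hj => by rw [coeff_ι_mul_t_pow, Finsupp.single_eq_of_ne (by omega)]

lemma degLT_t_pow {i n : ℕ} (hi : i < n) : P.degLT (P.t ^ i) n :=
  fun j hj => by rw [coeff_t_pow, Finsupp.single_eq_of_ne (by omega)]

lemma degLT_deg_add_one (g : R) : P.degLT g (P.deg g + 1) := fun i hi => by
  by_contra h
  have : i ≤ P.deg g := Finset.le_sup (f := id) (Finsupp.mem_support_iff.mpr h)
  omega

lemma coeff_deg_ne_zero {g : R} (hg : g ≠ 0) : P.coeff g (P.deg g) ≠ 0 := by
  have hne : (P.coeff g).support.Nonempty :=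
    Finsupp.support_nonempty_iff.mpr ((map_ne_zero_iff _ P.coeff.injective).mpr hg)
  obtain ⟨i, hi, hdeg⟩ := Finset.exists_mem_eq_sup _ hne id
  rw [deg, hdeg]
  exact Finsupp.mem_support_iff.mp hi

lemma degLT_map_of_degLT (F : R →+ R) {g : R} {n n' : ℕ} (hg : P.degLT g n)
    (hF : ∀ a, ∀ i < n, P.degLT (F (P.ι a * P.t ^ i)) n') : P.degLT (F g) n' := by
  rw [← P.sum_coeff g, map_finsuppSum]
  exact degLT_sum fun i hi => hF _ i (lt_of_mem_support hg hi)

lemma degLT_ι_mul (a : S) {g : R} {n : ℕ} (hg : P.degLT g n) : P.degLT (P.ι a * g) n :=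
  degLT_map_of_degLT (AddMonoidHom.mulLeft (P.ι a)) hg fun b i hi => by
    show P.degLT (P.ι a * (P.ι b * P.t ^ i)) n
    rw [← mul_assoc, ← map_mul]
    exact degLT_ι_mul_t_pow _ hi

lemma degLT_t_mul {g : R} {n : ℕ} (hg : P.degLT g n) : P.degLT (P.t * g) (n + 1) :=
  degLT_map_of_degLT (AddMonoidHom.mulLeft P.t) hg fun a i hi => by
    rw [AddMonoidHom.coe_mulLeft, ← mul_assoc, P.t_comm, add_mul, mul_assoc, ← pow_succ']
    exact degLT_add (degLT_ι_mul_t_pow _ (by omega)) (degLT_ι_mul_t_pow _ (by omega))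

lemma degLT_t_pow_mul {g : R} {n : ℕ} (j : ℕ) (hg : P.degLT g n) :
    P.degLT (P.t ^ j * g) (j + n) := by
  induction j with
  | zero => simpa using hg
  | succ j ih =>
    rw [pow_succ', mul_assoc, add_right_comm]
    exact degLT_t_mul ih

lemma degLT_mul {q r : R} {a b : ℕ} (hq : P.degLT q (a + 1)) (hr : P.degLT r b) :
    P.degLT (q * r) (a + b) :=
  degLT_map_of_degLT (AddMonoidHom.mulRight r) hq fun c i hi => by
    show P.degLT (P.ι c * P.t ^ i * r) _
    rw [mul_assoc]
    exact degLT_ι_mul c (degLT_mono (by omega) (degLT_t_pow_mul i hr))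

section Monic

variable {f : R} {m : ℕ}

lemma degLT_sub_t_pow (hf : P.MonicDeg f m) : P.degLT (f - P.t ^ m) m := by
  intro i hi
  rw [map_sub, Finsupp.sub_apply, coeff_t_pow, Finsupp.single_apply]
  rcases hi.eq_or_lt with rfl | h
  · rw [if_pos rfl, hf.1, sub_self]
  · rw [if_neg h.ne, hf.2 i h, sub_zero]

lemma coeff_mul_of_monicDeg (hf : P.MonicDeg f m) {q : R} {n : ℕ} (hq : P.degLT q (n + 1)) :
    P.coeff (q * f) (n + m) = P.coeff q n := by
  rw [← add_sub_cancel (P.t ^ m) f, mul_add, map_add P.coeff, Finsupp.add_apply, coeff_mul_t_pow,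
    Finsupp.mapDomain_apply (add_left_injective m), degLT_mul hq (degLT_sub_t_pow hf) _ le_rfl,
    add_zero]

lemma eq_zero_of_degLT_mul (hf : P.MonicDeg f m) {q : R} (hq : P.degLT (q * f) m) : q = 0 := by
  by_contra hq0
  have h := coeff_mul_of_monicDeg hf (degLT_deg_add_one q)
  rw [hq _ (Nat.le_add_left m _)] at h
  exact coeff_deg_ne_zero hq0 h.symm

lemma eq_of_degLT_of_sub_mem (hf : P.MonicDeg f m) {x y : R} (hx : P.degLT x m)
    (hy : P.degLT y m) (hxy : x - y ∈ Ideal.span {f}) : x = y := by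
  obtain ⟨q, hq⟩ := Ideal.mem_span_singleton'.mp hxy
  have hqf : P.degLT (q * f) m := hq ▸ degLT_sub hx hy
  rw [← sub_eq_zero, ← hq, eq_zero_of_degLT_mul hf hqf, zero_mul]

end Monic

section Remainder

variable {f : R} {m : ℕ} {modr : R → R}

lemma modr_sub_mem (hmodr : P.IsModr f m modr) (x : R) : modr x - x ∈ Ideal.span {f} := by
  obtain ⟨q, hq⟩ := (hmodr x).2
  rw [Ideal.mem_span_singleton']
  exact ⟨-q, by rw [neg_mul, eq_sub_of_add_eq' hq.symm]; abel⟩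

lemma modr_eq_modr_iff (hf : P.MonicDeg f m) (hmodr : P.IsModr f m modr) {x y : R} :
    modr x = modr y ↔ x - y ∈ Ideal.span {f} := by
  have hx := modr_sub_mem hmodr x
  have hy := modr_sub_mem hmodr y
  constructor
  · intro h
    have : x - y = (modr y - y) - (modr x - x) := by rw [h]; abel
    exact this ▸ sub_mem hy hx
  · intro h
    refine eq_of_degLT_of_sub_mem hf (hmodr x).1 (hmodr y).1 ?_
    have : modr x - modr y = (modr x - x) + (x - y) - (modr y - y) := by abel
    exact this ▸ sub_mem (add_mem hx h) hy

lemma modr_t_pow (hf : P.MonicDeg f m) (hmodr : P.IsModr f m modr) :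
    modr (P.t ^ m) = P.t ^ m - f := by
  refine eq_of_degLT_of_sub_mem hf (hmodr _).1 ?_ ?_
  · exact neg_sub f (P.t ^ m) ▸ degLT_neg (degLT_sub_t_pow hf)
  · have : modr (P.t ^ m) - (P.t ^ m - f) = (modr (P.t ^ m) - P.t ^ m) + f := by abel
    exact this ▸ add_mem (modr_sub_mem hmodr _) (Ideal.mem_span_singleton_self f)

lemma modr_assoc_of_isTwoSided (hf : P.MonicDeg f m) (hmodr : P.IsModr f m modr)
    [(Ideal.span {f}).IsTwoSided] (g h k : R) :
    modr (modr (g * h) * k) = modr (g * modr (h * k)) := by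
  rw [modr_eq_modr_iff hf hmodr]
  have : modr (g * h) * k - g * modr (h * k) =
      (modr (g * h) - g * h) * k - g * (modr (h * k) - h * k) := by noncomm_ring
  rw [this]
  exact sub_mem (Ideal.mul_mem_right _ _ (modr_sub_mem hmodr _))
    (Ideal.mul_mem_left _ _ (modr_sub_mem hmodr _))

lemma mul_mem_span_of_modr_assoc (hm : 2 ≤ m) (hf : P.MonicDeg f m)
    (hmodr : P.IsModr f m modr) {k : R}
    (hassoc : modr (modr (P.t ^ (m - 1) * P.t) * k) = modr (P.t ^ (m - 1) * modr (P.t * k))) :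
    f * k ∈ Ideal.span {f} := by
  have htm : P.t ^ m = P.t ^ (m - 1) * P.t := by rw [← pow_succ, Nat.sub_add_cancel (by omega)]
  rw [← htm, modr_t_pow hf hmodr, modr_eq_modr_iff hf hmodr] at hassoc
  have hinner := Ideal.mul_mem_left _ (P.t ^ (m - 1)) (modr_sub_mem hmodr (P.t * k))
  have : f * k = -(((P.t ^ m - f) * k - P.t ^ (m - 1) * modr (P.t * k)) +
      P.t ^ (m - 1) * (modr (P.t * k) - P.t * k)) := by rw [htm]; noncomm_ring
  exact this ▸ neg_mem (add_mem hassoc hinner)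

lemma isTwoSided_of_modr_assoc (hm : 2 ≤ m) (hf : P.MonicDeg f m) (hmodr : P.IsModr f m modr)
    (hassoc : ∀ g h k : R, P.degLT g m → P.degLT h m → P.degLT k m →
      modr (modr (g * h) * k) = modr (g * modr (h * k))) :
    (Ideal.span {f}).IsTwoSided := by
  refine (Ideal.isTwoSided_span_singleton_iff f).mpr fun r => ?_
  have hlow := mul_mem_span_of_modr_assoc hm hf hmodr <|
    hassoc _ _ _ (degLT_t_pow (by omega)) (pow_one P.t ▸ degLT_t_pow (by omega)) (hmodr r).1
  obtain ⟨q', hq'⟩ := Ideal.mem_span_singleton'.mp hlow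
  obtain ⟨q, hq⟩ := Ideal.mem_span_singleton'.mp (modr_sub_mem hmodr r)
  have : f * r = f * modr r - f * q * f := by rw [mul_assoc, hq]; noncomm_ring
  exact ⟨q' - f * q, by rw [this, ← hq', sub_mul]⟩

end Remainder

end SkewPolyRing

theorem petit_associative_iff_invariant_general {S R : Type*} [Ring S] [Ring R]
    (σ : S →+* S) (δ : S →+ S)
    (P : SkewPolyRing S R σ δ) (f : R) (m : ℕ) (hm : 2 ≤ m)
    (hf : P.MonicDeg f m) (modr : R → R) (hmodr : P.IsModr f m modr) :
    (∀ g h k : R, P.degLT g m → P.degLT h m → P.degLT k m →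
        modr (modr (g * h) * k) = modr (g * modr (h * k))) ↔
    (∀ r : R, ∃ q : R, f * r = q * f) := by
  rw [← Ideal.isTwoSided_span_singleton_iff]
  exact ⟨SkewPolyRing.isTwoSided_of_modr_assoc hm hf hmodr,
    fun _ g h k _ _ _ => SkewPolyRing.modr_assoc_of_isTwoSided hf hmodr g h k⟩

/-- The Petit algebra `S_f = R/Rf` (skew polynomials of degree `< m` with multiplication
`g ∘ h = gh mod_r f`) is associative if and only if `Rf` is a two-sided ideal of `R`,
i.e. `f` is right-invariant: `f·R ⊆ R·f`. -/
theorem petit_associative_iff_invariant {S R : Type*} [Ring S] [Ring R]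
    (σ : S →+* S) (δ : S →+ S) (hσ : Function.Injective σ)
    (hδ : ∀ a b : S, δ (a * b) = σ a * δ b + δ a * b)
    (P : SkewPolyRing S R σ δ) (f : R) (m : ℕ) (hm : 2 ≤ m)
    (hf : P.MonicDeg f m) (modr : R → R) (hmodr : P.IsModr f m modr) :
    (∀ g h k : R, P.degLT g m → P.degLT h m → P.degLT k m →
        modr (modr (g * h) * k) = modr (g * modr (h * k))) ↔
    (∀ r : R, ∃ q : R, f * r = q * f) :=
  petit_associative_iff_invariant_general σ δ P f m hm hf modr hmodr
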